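/- arXiv:2205.02025 — 11 statements merged into one kernel-verified Lean document; each statement's English description precedes it below -/
import Mathlib

section
/- Let k ≥ 2 be an integer and let λ : ℤ\{0} → ℝ with λ_i > 0 for all i. If the series Σ_{j≠0} λ_j converges, then there exists a unique function z : ℤ\{0} → ℝ such that z_i > 0 for all i, z is summable, and z_i = λ_i / (1 + Σ_{j≠0} z_j)^k holds for every i ≠ 0. -/
/-!
Summing the equation over `i` shows that `A = ∑' j, z j` must satisfy
`A * (1 + A) ^ k = ∑' j, λ j`, and conversely every root `A ≥ 0` of this equation yields the
solution `z i = λ i / (1 + A) ^ k`. Since `A ↦ A * (1 + A) ^ k` increases strictly from `0` on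
`[0, ∞)`, the root exists (intermediate value theorem) and is unique, hence so is `z`.
-/

open Set

lemma strictMonoOn_mul_one_add_pow (k : ℕ) :
    StrictMonoOn (fun A : ℝ => A * (1 + A) ^ k) (Ici 0) := by
  intro a ha b hb hab
  have hpow : (1 + a) ^ k ≤ (1 + b) ^ k :=
    pow_le_pow_left₀ (by linarith [mem_Ici.mp ha]) (by linarith) k
  have hpos : (0 : ℝ) < (1 + b) ^ k := pow_pos (by linarith [mem_Ici.mp hb]) k
  calc a * (1 + a) ^ k ≤ a * (1 + b) ^ k := mul_le_mul_of_nonneg_left hpow ha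
    _ < b * (1 + b) ^ k := mul_lt_mul_of_pos_right hab hpos

lemma exists_mul_one_add_pow_eq (k : ℕ) {L : ℝ} (hL : 0 ≤ L) :
    ∃ A : ℝ, 0 ≤ A ∧ A * (1 + A) ^ k = L := by
  have hLle : L ≤ L * (1 + L) ^ k := le_mul_of_one_le_right hL (one_le_pow₀ (by linarith))
  obtain ⟨A, hA, hAL⟩ := intermediate_value_Icc hL (f := fun A : ℝ => A * (1 + A) ^ k)
    (by fun_prop) ⟨by simpa using hL, hLle⟩
  exact ⟨A, hA.1, hAL⟩

lemma tsum_mul_one_add_pow_eq_tsum {ι : Type*} (k : ℕ) {lam z : ι → ℝ}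
    (hz : ∀ i, z i = lam i / (1 + ∑' j, z j) ^ k) (hA : 0 ≤ ∑' j, z j) :
    (∑' j, z j) * (1 + ∑' j, z j) ^ k = ∑' j, lam j := by
  have hpos : (0 : ℝ) < (1 + ∑' j, z j) ^ k := pow_pos (by linarith) k
  exact (eq_div_iff hpos.ne').mp ((tsum_congr hz).trans tsum_div_const)

theorem stmt_2_general (k : ℕ)
    (lam : {i : ℤ // i ≠ 0} → ℝ)
    (hlam : ∀ i, 0 < lam i) (hsum : Summable lam) :
    ∃! z : {i : ℤ // i ≠ 0} → ℝ,
      (∀ i, 0 < z i) ∧ Summable z ∧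
      ∀ i, z i = lam i / (1 + ∑' j, z j) ^ k := by
  obtain ⟨A₀, hA₀, hA₀L⟩ := exists_mul_one_add_pow_eq k (tsum_nonneg fun i => (hlam i).le)
  have hpow : (0 : ℝ) < (1 + A₀) ^ k := pow_pos (by linarith) k
  have htsum : ∑' j, lam j / (1 + A₀) ^ k = A₀ := by
    rw [tsum_div_const, ← hA₀L]
    field_simp
  refine ⟨fun i => lam i / (1 + A₀) ^ k,
    ⟨fun i => div_pos (hlam i) hpow, hsum.div_const _, fun i => by rw [htsum]⟩, ?_⟩
  rintro z ⟨hzpos, -, hz⟩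
  have hA : 0 ≤ ∑' j, z j := tsum_nonneg fun i => (hzpos i).le
  have hAA₀ : ∑' j, z j = A₀ :=
    (strictMonoOn_mul_one_add_pow k).injOn hA hA₀
      ((tsum_mul_one_add_pow_eq_tsum k hz hA).trans hA₀L.symm)
  funext i
  rw [hz i, hAA₀]

/-- Proposition 1: existence and uniqueness of a positive summable solution of
`z_i = λ_i / (1 + Σ_{j≠0} z_j)^k`. -/
theorem stmt_2 (k : ℕ) (hk : 2 ≤ k)
    (lam : {i : ℤ // i ≠ 0} → ℝ)
    (hlam : ∀ i, 0 < lam i) (hsum : Summable lam) :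
    ∃! z : {i : ℤ // i ≠ 0} → ℝ,
      (∀ i, 0 < z i) ∧ Summable z ∧
      ∀ i, z i = lam i / (1 + ∑' j, z j) ^ k :=
  stmt_2_general k lam hlam hsum
end

section
/- Let k ≥ 2 be an integer and let y > 0 be a real number with y ≠ 1/(k−1). Then there exists exactly one real number x > 0 with x ≠ y such that y(1+x)^k = x(1+y)^k. -/
/-!
Dividing by `x y`, the equation says `f x = f y` for `f x = (1 + x) ^ k / x`. On `(0, ∞)` the
function `f` has derivative `(1 + x) ^ (k - 1) * ((k - 1) x - 1) / x ^ 2`, so it strictly decreases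
on `(0, c]` and strictly increases on `[c, ∞)`, where `c = 1 / (k - 1)`; it tends to `∞` at both
ends. Hence every value `f y` with `y ≠ c` is taken exactly once more, on the other side of `c`.
-/

open Set Filter Topology

section Valley

variable {α δ : Type*} [ConditionallyCompleteLinearOrder α] [TopologicalSpace α] [OrderTopology α]
  [DenselyOrdered α] [LinearOrder δ] [TopologicalSpace δ] [OrderClosedTopology δ] {f : α → δ}

theorem exists_gt_apply_eq_of_tendsto_atTop {c : α} {v : δ} (hcont : ContinuousOn f (Ici c))
    (hv : f c < v) (htop : Tendsto f atTop atTop) : ∃ x, c < x ∧ f x = v := by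
  obtain ⟨b, hvb, hcb⟩ := ((htop.eventually_ge_atTop v).and (eventually_ge_atTop c)).exists
  obtain ⟨x, hx, hfx⟩ := intermediate_value_Icc hcb (hcont.mono Icc_subset_Ici_self) ⟨hv.le, hvb⟩
  exact ⟨x, hx.1.lt_of_ne (by rintro rfl; exact hv.ne hfx), hfx⟩

theorem exists_mem_Ioo_apply_eq_of_tendsto_nhdsGT {a c : α} {v : δ} (hac : a < c)
    (hcont : ContinuousOn f (Ioc a c)) (hv : f c < v) (hbot : Tendsto f (𝓝[>] a) atTop) :
    ∃ x ∈ Ioo a c, f x = v := by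
  have := nhdsGT_neBot_of_exists_gt ⟨c, hac⟩
  obtain ⟨b, hvb, hb⟩ := ((hbot.eventually_ge_atTop v).and (Ioo_mem_nhdsGT hac)).exists
  obtain ⟨x, hx, hfx⟩ := intermediate_value_Icc' hb.2.le
    (hcont.mono (Icc_subset_Ioc_iff hb.2.le |>.mpr ⟨hb.1, le_rfl⟩)) ⟨hv.le, hvb⟩
  exact ⟨x, ⟨hb.1.trans_le hx.1, hx.2.lt_of_ne (by rintro rfl; exact hv.ne hfx)⟩, hfx⟩

theorem existsUnique_ne_apply_eq_of_strictAntiOn_of_strictMonoOn {a c y : α} (hac : a < c)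
    (hcont : ContinuousOn f (Ioi a)) (hanti : StrictAntiOn f (Ioc a c))
    (hmono : StrictMonoOn f (Ici c)) (hbot : Tendsto f (𝓝[>] a) atTop)
    (htop : Tendsto f atTop atTop) (hy : a < y) (hyc : y ≠ c) :
    ∃! x, a < x ∧ x ≠ y ∧ f x = f y := by
  rcases hyc.lt_or_gt with hyc | hyc
  · have hfy : f c < f y := hanti ⟨hy, hyc.le⟩ ⟨hac, le_rfl⟩ hyc
    obtain ⟨x, hcx, hfx⟩ := exists_gt_apply_eq_of_tendsto_atTop
      (hcont.mono fun z hz => hac.trans_le hz) hfy htop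
    refine ⟨x, ⟨hac.trans hcx, (hyc.trans hcx).ne', hfx⟩, fun z ⟨hz, hzy, hfz⟩ => ?_⟩
    rcases le_or_gt z c with hzc | hzc
    · exact absurd (hanti.injOn ⟨hz, hzc⟩ ⟨hy, hyc.le⟩ hfz) hzy
    · exact hmono.injOn hzc.le hcx.le (hfz.trans hfx.symm)
  · have hfy : f c < f y := hmono le_rfl hyc.le hyc
    obtain ⟨x, hx, hfx⟩ := exists_mem_Ioo_apply_eq_of_tendsto_nhdsGT hac
      (hcont.mono Ioc_subset_Ioi_self) hfy hbot
    refine ⟨x, ⟨hx.1, (hx.2.trans hyc).ne, hfx⟩, fun z ⟨hz, hzy, hfz⟩ => ?_⟩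
    rcases le_or_gt c z with hcz | hzc
    · exact absurd (hmono.injOn hcz hyc.le hfz) hzy
    · exact hanti.injOn ⟨hz, hzc.le⟩ ⟨hx.1, hx.2.le⟩ (hfz.trans hfx.symm)

end Valley

noncomputable def onePlusPowDiv (k : ℕ) (x : ℝ) : ℝ := (1 + x) ^ k / x

namespace onePlusPowDiv

variable {k : ℕ}

theorem hasDerivAt (hk : 1 ≤ k) {x : ℝ} (hx : x ≠ 0) :
    HasDerivAt (onePlusPowDiv k) ((1 + x) ^ (k - 1) * ((k - 1) * x - 1) / x ^ 2) x := by
  have hnum : HasDerivAt (fun x : ℝ => (1 + x) ^ k) (k * (1 + x) ^ (k - 1)) x := by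
    simpa [Function.comp_def] using
      (hasDerivAt_pow k (1 + x)).comp x ((hasDerivAt_id x).const_add 1)
  refine (hnum.div (hasDerivAt_id x) hx).congr_deriv ?_
  obtain ⟨n, rfl⟩ := Nat.exists_eq_add_of_le' hk
  simp only [Nat.add_sub_cancel, Nat.cast_add, Nat.cast_one, id_eq, pow_succ]
  ring

theorem continuousOn : ContinuousOn (onePlusPowDiv k) (Ioi 0) :=
  ContinuousOn.div (by fun_prop) continuousOn_id fun _ hx => ne_of_gt hx

theorem strictAntiOn (hk : 1 ≤ k) : StrictAntiOn (onePlusPowDiv k) (Ioc 0 (1 / ((k : ℝ) - 1))) := by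
  refine strictAntiOn_of_deriv_neg (convex_Ioc _ _) (continuousOn.mono Ioc_subset_Ioi_self) ?_
  intro x hx
  rw [interior_Ioc] at hx
  obtain ⟨hx0, hxc⟩ := hx
  rw [(hasDerivAt hk hx0.ne').deriv]
  have hk' : (0 : ℝ) ≤ k - 1 := sub_nonneg.mpr (by exact_mod_cast hk)
  have hlin : ((k : ℝ) - 1) * x < 1 := by
    rcases hk'.eq_or_lt with hk' | hk'
    · simp [← hk']
    · exact (lt_div_iff₀' hk').mp (one_div ((k : ℝ) - 1) ▸ hxc)
  exact div_neg_of_neg_of_pos (mul_neg_of_pos_of_neg (by positivity) (by linarith)) (by positivity)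

theorem strictMonoOn (hk : 2 ≤ k) : StrictMonoOn (onePlusPowDiv k) (Ici (1 / ((k : ℝ) - 1))) := by
  have hk' : (0 : ℝ) < k - 1 := sub_pos.mpr (by exact_mod_cast hk)
  have hc : (0 : ℝ) < 1 / (k - 1) := by positivity
  refine strictMonoOn_of_deriv_pos (convex_Ici _)
    (continuousOn.mono fun x hx => hc.trans_le hx) ?_
  intro x hx
  rw [interior_Ici] at hx
  have hx0 : 0 < x := hc.trans hx
  rw [(hasDerivAt (by omega) hx0.ne').deriv]
  have hlin : 1 < ((k : ℝ) - 1) * x := (div_lt_iff₀' hk').mp hx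
  exact div_pos (mul_pos (by positivity) (by linarith)) (by positivity)

theorem tendsto_nhdsGT_zero : Tendsto (onePlusPowDiv k) (𝓝[>] 0) atTop := by
  refine tendsto_atTop_mono' _ ?_ tendsto_inv_nhdsGT_zero
  filter_upwards [self_mem_nhdsWithin] with x (hx : 0 < x)
  rw [onePlusPowDiv, inv_eq_one_div]
  gcongr
  exact one_le_pow₀ (by linarith)

theorem tendsto_atTop (hk : 2 ≤ k) : Tendsto (onePlusPowDiv k) atTop atTop := by
  refine tendsto_atTop_mono' _ ?_ tendsto_id
  filter_upwards [eventually_gt_atTop 0] with x hx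
  rw [id, onePlusPowDiv, le_div_iff₀ hx]
  calc x * x ≤ (1 + x) ^ 2 := by nlinarith
    _ ≤ (1 + x) ^ k := pow_le_pow_right₀ (by linarith) hk

theorem eq_iff {x y : ℝ} (hx : 0 < x) (hy : 0 < y) :
    onePlusPowDiv k x = onePlusPowDiv k y ↔ y * (1 + x) ^ k = x * (1 + y) ^ k := by
  rw [onePlusPowDiv, onePlusPowDiv, div_eq_div_iff hx.ne' hy.ne', mul_comm y, mul_comm x]

end onePlusPowDiv

/-- For `k ≥ 2` and `y > 0` with `y ≠ 1/(k-1)`, the equation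
`y(1+x)^k = x(1+y)^k` has exactly one positive root `x` different from `y`. -/
theorem stmt_6 (k : ℕ) (hk : 2 ≤ k) (y : ℝ) (hy : 0 < y)
    (hy' : y ≠ 1 / ((k : ℝ) - 1)) :
    ∃! x : ℝ, 0 < x ∧ x ≠ y ∧ y * (1 + x) ^ k = x * (1 + y) ^ k := by
  have hc : (0 : ℝ) < 1 / ((k : ℝ) - 1) :=
    one_div_pos.mpr (sub_pos.mpr (by exact_mod_cast hk))
  have h := existsUnique_ne_apply_eq_of_strictAntiOn_of_strictMonoOn hc onePlusPowDiv.continuousOn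
    (onePlusPowDiv.strictAntiOn (by omega)) (onePlusPowDiv.strictMonoOn hk)
    onePlusPowDiv.tendsto_nhdsGT_zero (onePlusPowDiv.tendsto_atTop hk) hy hy'
  refine (existsUnique_congr fun x => ?_).mp h
  exact and_congr_right fun hx => and_congr_right fun _ => onePlusPowDiv.eq_iff hx hy
end

section
/- Let k ≥ 2 be an integer and set y = 1/(k−1). Then for every real x > 0, the equality y(1+x)^k = x(1+y)^k implies x = y; that is, x = y is the only positive root of y(1+x)^k − x(1+y)^k = 0. -/
/-!
Put `t = (k - 1)(1 + x) / k`, so that `t = 1` exactly when `x = 1/(k-1)`. Clearing denominators,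
the equation becomes `t ^ k = (k - 1) x = 1 + k (t - 1)`, i.e. `t ^ k` meets its tangent line at
`t = 1`. Bernoulli's inequality is strict for `k ≥ 2` and `t ≠ 1`, so `t = 1`.
-/

theorem eq_one_of_pow_eq_one_add_mul_sub_one {t : ℝ} (ht : 0 ≤ t) {n : ℕ} (hn : 2 ≤ n)
    (h : t ^ n = 1 + n * (t - 1)) : t = 1 := by
  by_contra hne
  have hn' : (1 : ℝ) < n := by exact_mod_cast hn
  have hlt := one_add_mul_self_lt_rpow_one_add (s := t - 1) (by linarith) (sub_ne_zero.mpr hne) hn'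
  rw [add_sub_cancel, Real.rpow_natCast] at hlt
  linarith

theorem pow_eq_one_add_mul_sub_one_of_eq {k : ℕ} (hk : (1 : ℝ) < k) {x t : ℝ}
    (ht : k * t = (k - 1) * (1 + x))
    (h : 1 / ((k : ℝ) - 1) * (1 + x) ^ k = x * (1 + 1 / ((k : ℝ) - 1)) ^ k) :
    t ^ k = 1 + k * (t - 1) := by
  have hk0 : (k : ℝ) ≠ 0 := by positivity
  have hk1 : (k : ℝ) - 1 ≠ 0 := by linarith
  have h1y : 1 + 1 / ((k : ℝ) - 1) = k / (k - 1) := by field_simp; ring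
  have htx : t = (k - 1) * (1 + x) / k := by field_simp; linarith
  rw [h1y, div_pow] at h
  rw [htx, mul_div_assoc, mul_pow, div_pow]
  field_simp at h ⊢
  linear_combination h

/-- Degenerate case: for `y = 1/(k-1)`, `x = y` is the only positive root of
`y(1+x)^k = x(1+y)^k`. -/
theorem stmt_7 (k : ℕ) (hk : 2 ≤ k) (y : ℝ) (hy : y = 1 / ((k : ℝ) - 1)) :
    ∀ x : ℝ, 0 < x → y * (1 + x) ^ k = x * (1 + y) ^ k → x = y := by
  intro x hx heq
  subst hy
  have hk' : (1 : ℝ) < k := by exact_mod_cast hk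
  set t : ℝ := (k - 1) * (1 + x) / k with ht
  have hkt : k * t = (k - 1) * (1 + x) := by rw [ht]; field_simp
  have ht1 : t = 1 :=
    eq_one_of_pow_eq_one_add_mul_sub_one (by positivity) hk
      (pow_eq_one_add_mul_sub_one_of_eq hk' hkt heq)
  rw [ht1, mul_one] at hkt
  field_simp [show (k : ℝ) - 1 ≠ 0 by linarith]
  linarith
end

section
/- Let k ≥ 2 be an integer and y > 0 a real number. Then the set of positive real numbers x satisfying y(1+x)^k = x(1+y)^k has at most two elements. -/
open Set

/-
Dividing by `y`, the roots are the zeros of `x ↦ (1 + x) ^ k - ((1 + y) ^ k / y) * x`, a strictly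
convex function on `x ≥ -1` since `k ≥ 2`. A strictly convex function takes each value at most
twice: at three points `a < b < c` it would lie strictly below its chord at `b`.
-/

theorem exists_subset_pair_of_forall_not_lt_lt {α : Type*} [LinearOrder α] [Nonempty α]
    {S : Set α} (h : ∀ a ∈ S, ∀ b ∈ S, ∀ c ∈ S, a < b → ¬b < c) : ∃ a b, S ⊆ {a, b} := by
  by_contra! hS
  obtain ⟨a, ha, -⟩ := not_subset.1 (hS (Classical.arbitrary α) (Classical.arbitrary α))
  obtain ⟨b, hb, hba⟩ : ∃ b ∈ S, b ≠ a := by simpa [subset_def] using hS a a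
  wlog hab : a < b generalizing a b
  · exact this b hb a ha hba.symm (hba.lt_or_gt.resolve_right hab)
  obtain ⟨c, hc, hca, hcb⟩ : ∃ c ∈ S, c ≠ a ∧ c ≠ b := by simpa [subset_def] using hS a b
  rcases hca.lt_or_gt with hca | hac
  · exact h c hc a ha b hb hca hab
  rcases hcb.lt_or_gt with hcb | hbc
  · exact h a ha c hc b hb hac hcb
  · exact h a ha b hb c hc hab hbc

theorem StrictConvexOn.exists_subset_pair {𝕜 β : Type*} [Field 𝕜] [LinearOrder 𝕜]
    [IsStrictOrderedRing 𝕜] [AddCommMonoid β] [LinearOrder β] [IsOrderedAddMonoid β]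
    [Module 𝕜 β] [PosSMulStrictMono 𝕜 β] {s : Set 𝕜} {f : 𝕜 → β} (hf : StrictConvexOn 𝕜 s f)
    (t : β) :
    ∃ a b, {x ∈ s | f x = t} ⊆ {a, b} := by
  refine exists_subset_pair_of_forall_not_lt_lt ?_
  rintro a ⟨ha, hfa⟩ b ⟨-, hfb⟩ c ⟨hc, hfc⟩ hab hbc
  have := hf.lt_on_openSegment ha hc (hab.trans hbc).ne (Ioo_subset_openSegment ⟨hab, hbc⟩)
  rw [hfa, hfb, hfc, max_self] at this
  exact this.false

theorem strictConvexOn_one_add_pow_sub_mul {k : ℕ} (hk : 2 ≤ k) (c : ℝ) :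
    StrictConvexOn ℝ (Ici (-1)) fun x : ℝ ↦ (1 + x) ^ k - c * x := by
  have hpow := (strictConvexOn_pow hk).translate_right 1
  have hIci : (fun z : ℝ ↦ 1 + z) ⁻¹' Ici 0 = Ici (-1) := by
    ext; simp [neg_le_iff_add_nonneg']
  rw [hIci] at hpow
  exact hpow.sub_concaveOn ((LinearMap.mulLeft ℝ c).concaveOn (convex_Ici _))

/-- Descartes-type claim: for `k ≥ 2` and `y > 0`, the set of positive roots of
`y(1+x)^k = x(1+y)^k` has at most two elements. -/
theorem stmt_8 (k : ℕ) (hk : 2 ≤ k) (y : ℝ) (hy : 0 < y) :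
    ∃ a b : ℝ,
      {x : ℝ | 0 < x ∧ y * (1 + x) ^ k = x * (1 + y) ^ k} ⊆ {a, b} := by
  obtain ⟨a, b, hab⟩ :=
    (strictConvexOn_one_add_pow_sub_mul hk ((1 + y) ^ k / y)).exists_subset_pair 0
  refine ⟨a, b, fun x ⟨hx, hxy⟩ ↦ hab ⟨mem_Ici.2 (by linarith), ?_⟩⟩
  field_simp
  linarith
end

section
/- Let k ≥ 2 be an integer and Λ > 0, and set Λ_cr = k^k/(k−1)^{k+1}. Consider the system of equations A(1+B)^k = Λ and B(1+A)^k = Λ in positive reals A, B. If Λ ≤ Λ_cr, then the system has exactly one solution, and it satisfies A = B. If Λ > Λ_cr, then the system has exactly three solutions: one with A = B, and two further solutions (A*, B*) and (B*, A*) with A* ≠ B*. -/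
/-
On the diagonal `x ↦ x (1 + x) ^ k` is strictly increasing, so there is exactly one symmetric
solution. An off-diagonal solution with `A < B` is determined by the ratio
`r = (1 + B) / (1 + A) > 1`: the two equations give `B = r ^ k A`, which forces
`A = 1 / (r (1 + r + ⋯ + r ^ (k - 2)))`, and then
`Λ = (1 + ⋯ + r ^ (k - 1)) ^ k / (r (1 + ⋯ + r ^ (k - 2)) ^ (k + 1))`. This function of `r` is
continuous and unbounded on `[1, ∞)`, equals `Λ_cr` at `r = 1`, and is strictly increasing: its
logarithmic derivative has the sign of `(r ^ k - 1) ^ 2 - k ^ 2 r ^ (k - 1) (r - 1) ^ 2`, which is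
positive by AM-GM applied to `1, r, …, r ^ (k - 1)`. So off-diagonal solutions exist exactly when
`Λ > Λ_cr`, and then there is exactly one with `A < B`.
-/

open Finset Set Filter Topology

theorem geom_sum_eq_mul_add_one {k : ℕ} (hk : 1 ≤ k) (r : ℝ) :
    ∑ i ∈ range k, r ^ i = r * ∑ i ∈ range (k - 1), r ^ i + 1 := by
  obtain ⟨n, rfl⟩ := Nat.exists_eq_add_of_le' hk
  exact geom_sum_succ

theorem geom_sum_eq_pow_add {k : ℕ} (hk : 1 ≤ k) (r : ℝ) :
    ∑ i ∈ range k, r ^ i = r ^ (k - 1) + ∑ i ∈ range (k - 1), r ^ i := by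
  obtain ⟨n, rfl⟩ := Nat.exists_eq_add_of_le' hk
  exact geom_sum_succ'

theorem sq_mul_pow_lt_geom_sum_sq {k : ℕ} (hk : 2 ≤ k) {r : ℝ} (hr₀ : 0 < r) (hr₁ : r ≠ 1) :
    (k : ℝ) ^ 2 * r ^ (k - 1) < (∑ i ∈ range k, r ^ i) ^ 2 := by
  set c := √(r ^ (k - 1))
  have hc : c ^ 2 = r ^ (k - 1) := Real.sq_sqrt (by positivity)
  have hc₁ : c ≠ 1 := by
    rintro h
    rw [h, one_pow, eq_comm, pow_eq_one_iff_of_nonneg hr₀.le (by omega)] at hc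
    exact hr₁ hc
  -- AM-GM for `r ^ i` and `r ^ (k - 1 - i)`, whose product is `c ^ 2`
  have hpair : ∀ i ∈ range k, 2 * c ≤ r ^ i + r ^ (k - 1 - i) := by
    intro i hi
    have hprod : r ^ i * r ^ (k - 1 - i) = c ^ 2 := by
      rw [← pow_add, hc, Nat.add_sub_cancel' (by simp at hi; omega)]
    nlinarith [sq_nonneg (r ^ i - r ^ (k - 1 - i)), Real.sqrt_nonneg (r ^ (k - 1)),
      pow_pos hr₀ i, pow_pos hr₀ (k - 1 - i)]
  have hzero : 2 * c < r ^ 0 + r ^ (k - 1 - 0) := by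
    rw [pow_zero, Nat.sub_zero, ← hc]
    nlinarith [sq_pos_of_ne_zero (sub_ne_zero.2 hc₁)]
  have hlt : k * c < ∑ i ∈ range k, r ^ i := by
    have := sum_lt_sum hpair ⟨0, mem_range.2 (by omega), hzero⟩
    rw [sum_const, card_range, nsmul_eq_mul, sum_add_distrib,
      sum_range_reflect (fun i => r ^ i) k] at this
    linarith
  calc (k : ℝ) ^ 2 * r ^ (k - 1) = (k * c) ^ 2 := by rw [mul_pow, hc]
    _ < _ := pow_lt_pow_left₀ hlt (by positivity) two_ne_zero

theorem StrictMonoOn.existsUnique_eq {f : ℝ → ℝ} {a b L : ℝ} (hf : StrictMonoOn f (Ici a))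
    (hc : ContinuousOn f (Ici a)) (hab : a ≤ b) (ha : f a < L) (hb : L ≤ f b) :
    ∃! x, a < x ∧ f x = L := by
  obtain ⟨x, hx, hxL⟩ := intermediate_value_Icc hab (hc.mono Icc_subset_Ici_self) ⟨ha.le, hb⟩
  have hax : a < x := hx.1.lt_of_ne (by rintro rfl; exact ha.ne hxL)
  exact ⟨x, ⟨hax, hxL⟩, fun y hy => hf.injOn hy.1.le hax.le (hy.2.trans hxL.symm)⟩

theorem existsUnique_mul_one_add_pow_eq (k : ℕ) {Λ : ℝ} (hΛ : 0 < Λ) :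
    ∃! x, 0 < x ∧ x * (1 + x) ^ k = Λ := by
  have hmono : StrictMonoOn (fun x : ℝ => x * (1 + x) ^ k) (Ici 0) := fun x hx y hy hxy =>
    mul_lt_mul hxy (pow_le_pow_left₀ (by linarith [mem_Ici.1 hx]) (by linarith) k)
      (pow_pos (by linarith [mem_Ici.1 hx]) k) (mem_Ici.1 hy)
  refine hmono.existsUnique_eq (by fun_prop) hΛ.le (by simpa using hΛ) ?_
  exact le_mul_of_one_le_right hΛ.le (one_le_pow₀ (by linarith))

-- Written with geometric sums rather than `(r ^ k - 1) / (r - 1)` so that it is continuous at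
-- `r = 1`, where it takes the value `Λ_cr`.
noncomputable def lambdaOfRatio (k : ℕ) (r : ℝ) : ℝ :=
  (∑ i ∈ range k, r ^ i) ^ k / (r * (∑ i ∈ range (k - 1), r ^ i) ^ (k + 1))

noncomputable def offDiagSolution (k : ℕ) (r : ℝ) : ℝ × ℝ :=
  (1 / (r * ∑ i ∈ range (k - 1), r ^ i), r ^ (k - 1) / ∑ i ∈ range (k - 1), r ^ i)

def IsSolution (k : ℕ) (Λ : ℝ) (p : ℝ × ℝ) : Prop :=
  0 < p.1 ∧ 0 < p.2 ∧ p.1 * (1 + p.2) ^ k = Λ ∧ p.2 * (1 + p.1) ^ k = Λ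

section

variable {k : ℕ} {Λ r : ℝ} {p : ℝ × ℝ}

theorem IsSolution.swap (h : IsSolution k Λ p) : IsSolution k Λ p.swap :=
  ⟨h.2.1, h.1, h.2.2.2, h.2.2.1⟩

theorem isSolution_offDiagSolution (hk : 2 ≤ k) (hr : 0 < r) :
    IsSolution k (lambdaOfRatio k r) (offDiagSolution k r) := by
  have hQ : 0 < ∑ i ∈ range (k - 1), r ^ i := geom_sum_pos hr.le (by omega)
  have hP₁ := geom_sum_eq_mul_add_one (by omega : 1 ≤ k) r
  have hP₂ := geom_sum_eq_pow_add (by omega : 1 ≤ k) r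
  have hrk : r ^ k = r * r ^ (k - 1) := by rw [← pow_succ', Nat.sub_add_cancel (by omega)]
  unfold IsSolution offDiagSolution lambdaOfRatio
  generalize ∑ i ∈ range (k - 1), r ^ i = Q at *
  generalize ∑ i ∈ range k, r ^ i = P at *
  refine ⟨by positivity, by positivity, ?_, ?_⟩
  · rw [show 1 + r ^ (k - 1) / Q = P / Q by field_simp; linarith, div_pow]
    field_simp
    ring
  · rw [show 1 + 1 / (r * Q) = P / (r * Q) by field_simp; linarith, div_pow, mul_pow, hrk]
    field_simp
    ring

theorem offDiagSolution_fst_lt_snd (hk : 2 ≤ k) (hr : 1 < r) :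
    (offDiagSolution k r).1 < (offDiagSolution k r).2 := by
  have hQ : 0 < ∑ i ∈ range (k - 1), r ^ i := geom_sum_pos (by linarith) (by omega)
  rw [offDiagSolution, ← div_div, one_div]
  exact div_lt_div_of_pos_right ((inv_lt_one_of_one_lt₀ hr).trans_le (one_le_pow₀ hr.le)) hQ

theorem exists_eq_offDiagSolution (hk : 2 ≤ k) (h : IsSolution k Λ p) (hlt : p.1 < p.2) :
    ∃ r, 1 < r ∧ p = offDiagSolution k r := by
  obtain ⟨A, B⟩ := p
  obtain ⟨hA, hB, hAΛ, hBΛ⟩ := h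
  dsimp only at hA hB hAΛ hBΛ hlt
  set r := (1 + B) / (1 + A)
  have hr : 1 < r := (one_lt_div (by linarith)).2 (by linarith)
  have hrA : 1 + B = r * (1 + A) := (div_mul_cancel₀ _ (by positivity)).symm
  have hBA : B = r ^ k * A := by
    have h : (r ^ k * A) * (1 + A) ^ k = B * (1 + A) ^ k := by
      rw [hBΛ, ← hAΛ, hrA, mul_pow]; ring
    exact (mul_right_cancel₀ (by positivity) h).symm
  have hQ := geom_sum_mul r (k - 1)
  have hrk : r ^ k = r * r ^ (k - 1) := by rw [← pow_succ', Nat.sub_add_cancel (by omega)]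
  refine ⟨r, hr, ?_⟩
  simp only [offDiagSolution, Prod.mk.injEq]
  generalize ∑ i ∈ range (k - 1), r ^ i = Q at *
  -- substituting `B = r ^ k A` into `1 + B = r (1 + A)` leaves `(r - 1) (r Q A - 1) = 0`
  have hAQ : A * (r * Q) = 1 := by
    have : (r - 1) * (A * (r * Q) - 1) = 0 := by
      rw [hBA, hrk, ← sub_add_cancel (r ^ (k - 1)) 1, ← hQ] at hrA
      linear_combination hrA
    exact sub_eq_zero.1 ((mul_eq_zero.1 this).resolve_left (sub_ne_zero.2 hr.ne'))
  have hrQ : r * Q ≠ 0 := right_ne_zero_of_mul_eq_one hAQ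
  rw [hBA, eq_one_div_of_mul_eq_one_left hAQ, hrk]
  exact ⟨rfl, by field_simp⟩

theorem isSolution_iff (hk : 2 ≤ k) :
    IsSolution k Λ p ↔ (∃ x, 0 < x ∧ x * (1 + x) ^ k = Λ ∧ p = (x, x)) ∨
      ∃ r, 1 < r ∧ lambdaOfRatio k r = Λ ∧
        (p = offDiagSolution k r ∨ p = (offDiagSolution k r).swap) := by
  have hΛ (r : ℝ) (hr : 1 < r) (h : IsSolution k Λ (offDiagSolution k r)) :
      lambdaOfRatio k r = Λ :=
    (isSolution_offDiagSolution hk (by linarith)).2.2.1.symm.trans h.2.2.1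
  constructor
  · intro h
    rcases lt_trichotomy p.1 p.2 with hlt | heq | hgt
    · obtain ⟨r, hr, rfl⟩ := exists_eq_offDiagSolution hk h hlt
      exact .inr ⟨r, hr, hΛ r hr h, .inl rfl⟩
    · exact .inl ⟨p.1, h.1, heq ▸ h.2.2.1, Prod.ext rfl heq.symm⟩
    · obtain ⟨r, hr, hp⟩ := exists_eq_offDiagSolution hk h.swap hgt
      exact .inr ⟨r, hr, hΛ r hr (hp ▸ h.swap), .inr (by rw [← hp, Prod.swap_swap])⟩
  · rintro (⟨x, hx, hxΛ, rfl⟩ | ⟨r, hr, rfl, rfl | rfl⟩)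
    · exact ⟨hx, hx, hxΛ, hxΛ⟩
    · exact isSolution_offDiagSolution hk (by linarith)
    · exact (isSolution_offDiagSolution hk (by linarith)).swap

theorem lambdaOfRatio_one (hk : 1 ≤ k) : lambdaOfRatio k 1 = k ^ k / ((k : ℝ) - 1) ^ (k + 1) := by
  simp [lambdaOfRatio, Nat.cast_sub hk]

theorem lambdaOfRatio_eq_div (hr : r ≠ 1) :
    lambdaOfRatio k r = (r - 1) * (r ^ k - 1) ^ k / (r * (r ^ (k - 1) - 1) ^ (k + 1)) := by
  have h : (r - 1) ^ (k + 1) ≠ 0 := pow_ne_zero _ (sub_ne_zero.2 hr)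
  rw [lambdaOfRatio, ← geom_sum_mul, ← geom_sum_mul, mul_pow, mul_pow, ← mul_div_mul_left _ _ h]
  congr 1 <;> ring

theorem continuousOn_lambdaOfRatio (hk : 2 ≤ k) : ContinuousOn (lambdaOfRatio k) (Ioi 0) := by
  refine ContinuousOn.div (by fun_prop) (by fun_prop) fun r (hr : 0 < r) => ?_
  have : 0 < ∑ i ∈ range (k - 1), r ^ i := geom_sum_pos hr.le (by omega)
  positivity

theorem deriv_lambdaOfRatio_pos (hk : 2 ≤ k) (hr : 1 < r) : 0 < deriv (lambdaOfRatio k) r := by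
  obtain ⟨m, rfl⟩ := Nat.exists_eq_add_of_le' hk
  have heq : lambdaOfRatio (m + 2) =ᶠ[𝓝 r]
      fun x => (x - 1) * (x ^ (m + 2) - 1) ^ (m + 2) / (x * (x ^ (m + 1) - 1) ^ (m + 3)) :=
    eventually_of_mem (Ioi_mem_nhds hr) fun x (hx : 1 < x) => lambdaOfRatio_eq_div hx.ne'
  have hr₀ : 0 < r := by linarith
  have hp : 0 < r ^ (m + 2) - 1 := sub_pos.2 (one_lt_pow₀ hr (by omega))
  have hq : 0 < r ^ (m + 1) - 1 := sub_pos.2 (one_lt_pow₀ hr (by omega))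
  have hN := ((hasDerivAt_id' r).sub_const 1).fun_mul
    (((hasDerivAt_pow (m + 2) r).sub_const 1).fun_pow (m + 2))
  have hD := (hasDerivAt_id' r).fun_mul (((hasDerivAt_pow (m + 1) r).sub_const 1).fun_pow (m + 3))
  rw [heq.deriv_eq, (hN.fun_div hD (by positivity)).deriv]
  refine div_pos ?_ (by positivity)
  have hamgm : ((m : ℝ) + 2) ^ 2 * r ^ (m + 1) * (r - 1) ^ 2 < (r ^ (m + 2) - 1) ^ 2 := by
    have h := mul_lt_mul_of_pos_right (sq_mul_pow_lt_geom_sum_sq (k := m + 2) (by omega) hr₀ hr.ne')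
      (pow_pos (sub_pos.2 hr) 2)
    rw [← mul_pow, geom_sum_mul] at h
    push_cast at h
    simpa using h
  -- the quotient-rule numerator factors as `(r^(m+2) - 1)^(m+1) (r^(m+1) - 1)^(m+2)` times
  -- the AM-GM gap `(r^(m+2) - 1)^2 - (m+2)^2 r^(m+1) (r - 1)^2`
  convert mul_pos (mul_pos (pow_pos hp (m + 1)) (pow_pos hq (m + 2))) (sub_pos.2 hamgm) using 1
  simp only [Nat.add_sub_cancel]
  push_cast
  ring

theorem strictMonoOn_lambdaOfRatio (hk : 2 ≤ k) : StrictMonoOn (lambdaOfRatio k) (Ici 1) :=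
  strictMonoOn_of_deriv_pos (convex_Ici 1)
    ((continuousOn_lambdaOfRatio hk).mono (Ici_subset_Ioi.2 one_pos))
    fun _ hr => deriv_lambdaOfRatio_pos hk (by rwa [interior_Ici] at hr)

theorem div_le_lambdaOfRatio (hk : 2 ≤ k) (hr : 1 ≤ r) : r / (k - 1) ≤ lambdaOfRatio k r := by
  have hP := geom_sum_eq_mul_add_one (by omega : 1 ≤ k) r
  obtain ⟨m, rfl⟩ := Nat.exists_eq_add_of_le' hk
  have hr₀ : 0 < r := by linarith
  have hQ : 0 < ∑ i ∈ range (m + 1), r ^ i := geom_sum_pos hr₀.le (by omega)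
  have hQle : ∑ i ∈ range (m + 1), r ^ i ≤ (m + 1) * r ^ m := by
    calc ∑ i ∈ range (m + 1), r ^ i ≤ ∑ _i ∈ range (m + 1), r ^ m :=
          sum_le_sum fun i hi => pow_le_pow_right₀ hr (Nat.lt_succ_iff.1 (mem_range.1 hi))
      _ = (m + 1) * r ^ m := by simp
  rw [lambdaOfRatio]
  simp only [show m + 2 - 1 = m + 1 from rfl] at hP ⊢
  generalize ∑ i ∈ range (m + 1), r ^ i = Q at *
  calc r / ((m + 2 : ℕ) - 1 : ℝ) = r ^ (m + 1) / ((m + 1) * r ^ m) := by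
        rw [pow_succ', mul_div_mul_right _ _ (by positivity)]
        push_cast
        ring
    _ ≤ r ^ (m + 1) / Q := by gcongr
    _ = (r * Q) ^ (m + 2) / (r * Q ^ (m + 2 + 1)) := by field_simp; ring
    _ ≤ _ := by rw [hP]; gcongr; linarith

theorem existsUnique_lambdaOfRatio_eq (hk : 2 ≤ k) {L : ℝ} (hL : lambdaOfRatio k 1 < L) :
    ∃! r, 1 < r ∧ lambdaOfRatio k r = L := by
  have hk₁ : (0 : ℝ) < k - 1 := by
    have : (2 : ℝ) ≤ k := by exact_mod_cast hk
    linarith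
  refine (strictMonoOn_lambdaOfRatio hk).existsUnique_eq
    ((continuousOn_lambdaOfRatio hk).mono (Ici_subset_Ioi.2 one_pos))
    (le_max_left 1 ((k - 1) * L)) hL ?_
  refine le_trans ?_ (div_le_lambdaOfRatio hk (le_max_left _ _))
  rw [le_div_iff₀ hk₁, mul_comm]
  exact le_max_right _ _

end

/-- Analytic core of Theorem 2: the system `A(1+B)^k = Λ`, `B(1+A)^k = Λ` in
positive reals has exactly one (diagonal) solution for `Λ ≤ Λ_cr`, and exactly
three solutions (one diagonal, two swapped off-diagonal ones) for `Λ > Λ_cr`. -/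
theorem stmt_10 (k : ℕ) (hk : 2 ≤ k) (Λ : ℝ) (hΛ : 0 < Λ)
    (Λcr : ℝ) (hΛcr : Λcr = (k : ℝ) ^ k / ((k : ℝ) - 1) ^ (k + 1))
    (S : Set (ℝ × ℝ))
    (hS : S = {p : ℝ × ℝ | 0 < p.1 ∧ 0 < p.2 ∧
      p.1 * (1 + p.2) ^ k = Λ ∧ p.2 * (1 + p.1) ^ k = Λ}) :
    (Λ ≤ Λcr → (∃! p : ℝ × ℝ, p ∈ S) ∧ ∀ p ∈ S, p.1 = p.2) ∧
    (Λcr < Λ → ∃ A₀ A B : ℝ, A ≠ B ∧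
      S = {(A₀, A₀), (A, B), (B, A)}) := by
  have hmem (p : ℝ × ℝ) : p ∈ S ↔ IsSolution k Λ p := by subst hS; exact Iff.rfl
  obtain ⟨x₀, hx₀, hx₀_unique⟩ := existsUnique_mul_one_add_pow_eq k hΛ
  have hx₀S : (x₀, x₀) ∈ S := (hmem _).2 ((isSolution_iff hk).2 (.inl ⟨x₀, hx₀.1, hx₀.2, rfl⟩))
  rw [hΛcr, ← lambdaOfRatio_one (by omega)]
  constructor
  · intro hle
    have hdiag (p : ℝ × ℝ) (hp : p ∈ S) : p = (x₀, x₀) := by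
      rcases (isSolution_iff hk).1 ((hmem p).1 hp) with ⟨x, hx, hxΛ, rfl⟩ | ⟨r, hr, hrΛ, -⟩
      · rw [hx₀_unique x ⟨hx, hxΛ⟩]
      · linarith [strictMonoOn_lambdaOfRatio hk self_mem_Ici (mem_Ici.2 hr.le) hr]
    exact ⟨⟨(x₀, x₀), hx₀S, hdiag⟩, fun p hp => by rw [hdiag p hp]⟩
  · intro hlt
    obtain ⟨r, ⟨hr, hrΛ⟩, hr_unique⟩ := existsUnique_lambdaOfRatio_eq hk hlt
    refine ⟨x₀, _, _, (offDiagSolution_fst_lt_snd hk hr).ne, Set.ext fun p => ?_⟩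
    rw [hmem, isSolution_iff hk]
    constructor
    · rintro (⟨x, hx, hxΛ, rfl⟩ | ⟨r', hr', hr'Λ, rfl | rfl⟩)
      · exact .inl (by rw [hx₀_unique x ⟨hx, hxΛ⟩])
      · exact .inr (.inl (by rw [hr_unique r' ⟨hr', hr'Λ⟩]))
      · exact .inr (.inr (by rw [hr_unique r' ⟨hr', hr'Λ⟩]; rfl))
    · rintro (rfl | rfl | rfl)
      · exact .inl ⟨x₀, hx₀.1, hx₀.2, rfl⟩
      · exact .inr ⟨r, hr, hrΛ, .inl rfl⟩
      · exact .inr ⟨r, hr, hrΛ, .inr rfl⟩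
end

section
/- Let f : [0,1] → [0,1] be a continuous function with a fixed point ξ ∈ (0,1). Assume f is differentiable at ξ and f'(ξ) < −1. Then there exist points x_0 and x_1 with 0 ≤ x_0 < ξ < x_1 ≤ 1 such that f(x_0) = x_1 and f(x_1) = x_0. -/
/-!
Since `f' < -1`, both `f` and `f ∘ f - id` change sign at `ξ`: for `a` slightly left of `ξ` the
point overshoots, `ξ < f a`, and returns to the left of itself, `f (f a) < a`. As
`f (f 0) ≥ 0`, the map `f ∘ f - id` has a last zero `x₀` in `[0, a]`. This zero is not a fixed
point of `f`: were `f x₀ ≤ ξ`, some `c ∈ [x₀, a]` would have `f c = ξ`, hence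
`f (f c) - c = ξ - c > 0`, contradicting the choice of `x₀`. So `x₀ < ξ < f x₀` is a 2-cycle.
-/

open Set Filter Topology

namespace HasDerivAt

variable {f : ℝ → ℝ} {f' x : ℝ}

theorem eventually_nhdsLT_lt_of_pos (hf : HasDerivAt f f' x) (hf' : 0 < f') :
    ∀ᶠ y in 𝓝[<] x, f y < f x := by
  have hslope : ∀ᶠ y in 𝓝[<] x, 0 < slope f x y :=
    ((hasDerivAt_iff_tendsto_slope.mp hf).mono_left (nhdsLT_le_nhdsNE x)).eventually
      (eventually_gt_nhds hf')
  filter_upwards [hslope, self_mem_nhdsWithin] with y hy hyx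
  exact (slope_pos_iff_gt hyx).mp hy

theorem eventually_nhdsLT_gt_of_neg (hf : HasDerivAt f f' x) (hf' : f' < 0) :
    ∀ᶠ y in 𝓝[<] x, f x < f y := by
  filter_upwards [hf.neg.eventually_nhdsLT_lt_of_pos (neg_pos.mpr hf')] with y hy
  exact neg_lt_neg_iff.mp hy

end HasDerivAt

theorem eventually_nhdsLT_overshoot_of_deriv_lt_neg_one {f : ℝ → ℝ} {f' ξ : ℝ}
    (hf : HasDerivAt f f' ξ) (hfix : f ξ = ξ) (hf' : f' < -1) :
    ∀ᶠ a in 𝓝[<] ξ, ξ < f a ∧ f (f a) < a := by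
  have hff : HasDerivAt (fun x ↦ f (f x) - x) (f' * f' - 1) ξ :=
    ((hfix.symm ▸ hf : HasDerivAt f f' (f ξ)).comp ξ hf).sub (hasDerivAt_id ξ)
  filter_upwards [hf.eventually_nhdsLT_gt_of_neg (by linarith),
    hff.eventually_nhdsLT_lt_of_pos (by nlinarith)] with a hfa hffa
  simp only [hfix, sub_self, sub_neg] at hfa hffa
  exact ⟨hfa, hffa⟩

theorem ContinuousOn.exists_last_zero {g : ℝ → ℝ} {p a : ℝ} (hpa : p ≤ a)
    (hg : ContinuousOn g (Icc p a)) (hp : 0 ≤ g p) (ha : g a < 0) :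
    ∃ x ∈ Ico p a, g x = 0 ∧ ∀ y ∈ Ioc x a, g y < 0 := by
  set S := Icc p a ∩ g ⁻¹' Ici 0
  have hS : IsClosed S := hg.preimage_isClosed_of_isClosed isClosed_Icc isClosed_Ici
  have hpS : p ∈ S := ⟨⟨le_rfl, hpa⟩, hp⟩
  have hSbdd : BddAbove S := ⟨a, fun y hy ↦ hy.1.2⟩
  set x := sSup S
  obtain ⟨⟨hpx, hxa⟩, hgx⟩ : x ∈ S := hS.csSup_mem ⟨p, hpS⟩ hSbdd
  have hlast : ∀ y ∈ Ioc x a, g y < 0 := fun y hy ↦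
    not_le.mp fun hgy ↦ (le_csSup hSbdd ⟨⟨hpx.trans hy.1.le, hy.2⟩, hgy⟩).not_gt hy.1
  obtain ⟨z, ⟨hxz, hza⟩, hgz⟩ :=
    intermediate_value_Icc' hxa (hg.mono (Icc_subset_Icc_left hpx)) ⟨ha.le, hgx⟩
  have hzx : z = x :=
    le_antisymm (le_csSup hSbdd ⟨⟨hpx.trans hxz, hza⟩, hgz.ge⟩) hxz
  exact ⟨x, ⟨hpx, lt_of_le_of_ne hxa fun h ↦ ha.not_ge (h ▸ hgx)⟩, hzx ▸ hgz, hlast⟩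

theorem exists_two_cycle_of_overshoot {f : ℝ → ℝ} {l u ξ a : ℝ}
    (hmaps : MapsTo f (Icc l u) (Icc l u)) (hcont : ContinuousOn f (Icc l u))
    (hfix : f ξ = ξ) (ha : a ∈ Icc l u) (haξ : a < ξ) (hfa : ξ < f a) (hffa : f (f a) < a) :
    ∃ x ∈ Ico l a, ξ < f x ∧ f (f x) = x := by
  have hsub : Icc l a ⊆ Icc l u := Icc_subset_Icc_right ha.2
  have hg : ContinuousOn (fun x ↦ f (f x) - x) (Icc l a) :=
    ((hcont.comp hcont hmaps).sub continuousOn_id).mono hsub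
  have hgl : 0 ≤ f (f l) - l := sub_nonneg.mpr (hmaps (hmaps ⟨le_rfl, ha.1.trans ha.2⟩)).1
  obtain ⟨x, ⟨hlx, hxa⟩, hgx, hlast⟩ := hg.exists_last_zero ha.1 hgl (sub_neg.mpr hffa)
  refine ⟨x, ⟨hlx, hxa⟩, not_le.mp fun hfx ↦ ?_, sub_eq_zero.mp hgx⟩
  obtain ⟨c, ⟨hxc, hca⟩, hfc⟩ := intermediate_value_Icc hxa.le
    (hcont.mono ((Icc_subset_Icc_left hlx).trans hsub)) ⟨hfx, hfa.le⟩
  have hgc : 0 < f (f c) - c := by rw [hfc, hfix]; linarith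
  rcases hxc.eq_or_lt with rfl | hxc
  · exact hgc.ne' hgx
  · exact hgc.not_gt (hlast c ⟨hxc, hca⟩)

/-- Lemma (cited from [K]): a continuous self-map of `[0,1]` with a fixed point
`ξ ∈ (0,1)` at which it is differentiable with derivative `< -1` has a 2-cycle
`x₀ < ξ < x₁`. -/
theorem stmt_11 (f : ℝ → ℝ)
    (hmaps : Set.MapsTo f (Set.Icc 0 1) (Set.Icc 0 1))
    (hcont : ContinuousOn f (Set.Icc 0 1))
    (ξ : ℝ) (hξ : ξ ∈ Set.Ioo (0 : ℝ) 1) (hfix : f ξ = ξ)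
    (f' : ℝ) (hderiv : HasDerivWithinAt f f' (Set.Icc 0 1) ξ)
    (hf' : f' < -1) :
    ∃ x₀ x₁ : ℝ, 0 ≤ x₀ ∧ x₀ < ξ ∧ ξ < x₁ ∧ x₁ ≤ 1 ∧
      f x₀ = x₁ ∧ f x₁ = x₀ := by
  have hf : HasDerivAt f f' ξ := hderiv.hasDerivAt (Icc_mem_nhds hξ.1 hξ.2)
  obtain ⟨a, ⟨hfa, hffa⟩, ha0, haξ⟩ :=
    ((eventually_nhdsLT_overshoot_of_deriv_lt_neg_one hf hfix hf').and
      (Ioo_mem_nhdsLT hξ.1)).exists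
  obtain ⟨x₀, ⟨hx₀, hx₀a⟩, hfx₀, hffx₀⟩ := exists_two_cycle_of_overshoot hmaps hcont hfix
    ⟨ha0.le, haξ.le.trans hξ.2.le⟩ haξ hfa hffa
  exact ⟨x₀, f x₀, hx₀, hx₀a.trans haξ, hfx₀, (hmaps ⟨hx₀, by linarith [hξ.2]⟩).2, rfl, hffx₀⟩
end

section
/- Let Λ > 4 be a real number and set A = (Λ − 2 + √(Λ(Λ−4)))/2 and B = (Λ − 2 − √(Λ(Λ−4)))/2. Then A > 0, B > 0, A ≠ B, A(1+B)^2 = Λ, and B(1+A)^2 = Λ. -/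
/-!
`A` and `B` are the two roots of `t ^ 2 - (Λ - 2) t + 1`, whose discriminant is `Λ (Λ - 4) > 0`.
So `A + B = Λ - 2` and `A B = 1`; the latter forces both roots positive and turns
`A (1 + B) ^ 2 = A + 2 A B + (A B) B` into `A + B + 2 = Λ`, and symmetrically for `B (1 + A) ^ 2`.
-/

theorem mul_one_add_sq_of_mul_eq_one {R : Type*} [CommRing R] {x y : R} (h : x * y = 1) :
    x * (1 + y) ^ 2 = x + y + 2 := by
  linear_combination (2 + y) * h

theorem half_add_mul_half_sub_eq_one {K : Type*} [Field K] [NeZero (2 : K)] {p s : K}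
    (hs : s ^ 2 = p ^ 2 - 4) : (p + s) / 2 * ((p - s) / 2) = 1 := by
  field_simp
  linear_combination -hs

theorem pos_and_pos_of_mul_eq_one_of_add_pos {K : Type*} [Field K] [LinearOrder K]
    [IsStrictOrderedRing K] {x y : K} (h : x * y = 1) (hxy : 0 < x + y) : 0 < x ∧ 0 < y := by
  rcases pos_and_pos_or_neg_and_neg_of_mul_pos (h ▸ one_pos : 0 < x * y) with hpos | ⟨hx, hy⟩
  · exact hpos
  · exact absurd hxy (by linarith)

/-- Formula (19) of the paper for `k = 2`: for `Λ > 4` the two off-diagonal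
positive solutions of `A(1+B)^2 = Λ = B(1+A)^2` are given explicitly. -/
theorem stmt_13 (Λ : ℝ) (hΛ : 4 < Λ)
    (A B : ℝ)
    (hA : A = (Λ - 2 + Real.sqrt (Λ * (Λ - 4))) / 2)
    (hB : B = (Λ - 2 - Real.sqrt (Λ * (Λ - 4))) / 2) :
    0 < A ∧ 0 < B ∧ A ≠ B ∧ A * (1 + B) ^ 2 = Λ ∧ B * (1 + A) ^ 2 = Λ := by
  have hdisc : 0 < Λ * (Λ - 4) := mul_pos (by linarith) (by linarith)
  have hsq : Real.sqrt (Λ * (Λ - 4)) ^ 2 = (Λ - 2) ^ 2 - 4 := by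
    rw [Real.sq_sqrt hdisc.le]; ring
  have hprod : A * B = 1 := hA ▸ hB ▸ half_add_mul_half_sub_eq_one hsq
  have hsum : A + B = Λ - 2 := by rw [hA, hB]; ring
  obtain ⟨hA_pos, hB_pos⟩ := pos_and_pos_of_mul_eq_one_of_add_pos hprod (by linarith)
  refine ⟨hA_pos, hB_pos, ?_, ?_, ?_⟩
  · have := Real.sqrt_pos.2 hdisc
    rw [hA, hB]
    intro h
    linarith
  · rw [mul_one_add_sq_of_mul_eq_one hprod]; linarith
  · rw [mul_one_add_sq_of_mul_eq_one (mul_comm A B ▸ hprod)]; linarith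
end

section
/- Let λ, z, z̃ : ℤ\{0} → ℝ with λ_i z_i > 0 and λ_i z̃_i > 0 for all i, and suppose S = Σ_{l≠0} λ_l z_l and S̃ = Σ_{l≠0} λ_l z̃_l both converge. Define x_0 = (1+S)/(1+S+S̃) and x_j = λ_j z̃_j/(1+S+S̃) for j ≠ 0. Then x_0 = (1−x_0)/(1+S̃) + x_0·(1 − S̃/((1+S)(1+S̃))) and x_j = (1−x_0)·λ_j z̃_j/(1+S̃) + x_0·λ_j z̃_j/((1+S)(1+S̃)) for every j ≠ 0, the family (x_j)_{j∈ℤ} is summable, and Σ_{j∈ℤ} x_j = 1. -/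
theorem HasSum.add_of_subtype_ne {β α : Type*} [AddCommMonoid α] [TopologicalSpace α]
    [ContinuousAdd α] {f : β → α} {a : α} (b : β)
    (h : HasSum (fun l : {i : β // i ≠ b} => f l) a) : HasSum f (f b + a) :=
  (hasSum_singleton b f).add_compl h

section StationaryBalance

variable {S St : ℝ} (hS : 0 ≤ S) (hSt : 0 ≤ St)
include hS hSt

theorem stationary_balance_zero :
    (1 + S) / (1 + S + St) = (1 - (1 + S) / (1 + S + St)) / (1 + St) +
      (1 + S) / (1 + S + St) * (1 - St / ((1 + S) * (1 + St))) := by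
  field_simp
  ring

theorem stationary_balance_ne_zero (w : ℝ) :
    w / (1 + S + St) = (1 - (1 + S) / (1 + S + St)) * w / (1 + St) +
      (1 + S) / (1 + S + St) * w / ((1 + S) * (1 + St)) := by
  field_simp
  ring

end StationaryBalance

theorem stmt_14_general (lam z zt : ℤ → ℝ)
    (hpos : ∀ i : ℤ, i ≠ 0 → 0 < lam i * z i)
    (hpos' : ∀ i : ℤ, i ≠ 0 → 0 < lam i * zt i)
    (hSt : Summable fun l : {i : ℤ // i ≠ 0} => lam l * zt l)
    (S St : ℝ)
    (hSdef : S = ∑' l : {i : ℤ // i ≠ 0}, lam l * z l)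
    (hStdef : St = ∑' l : {i : ℤ // i ≠ 0}, lam l * zt l)
    (x : ℤ → ℝ)
    (hx0 : x 0 = (1 + S) / (1 + S + St))
    (hxj : ∀ j : ℤ, j ≠ 0 → x j = lam j * zt j / (1 + S + St)) :
    x 0 = (1 - x 0) / (1 + St) + x 0 * (1 - St / ((1 + S) * (1 + St))) ∧
    (∀ j : ℤ, j ≠ 0 →
      x j = (1 - x 0) * (lam j * zt j) / (1 + St) +
        x 0 * (lam j * zt j) / ((1 + S) * (1 + St))) ∧
    Summable x ∧ ∑' j : ℤ, x j = 1 := by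
  have hS0 : 0 ≤ S := hSdef ▸ tsum_nonneg fun l => (hpos l l.2).le
  have hSt0 : 0 ≤ St := hStdef ▸ tsum_nonneg fun l => (hpos' l l.2).le
  have hx : HasSum x 1 := by
    have hStsum : HasSum (fun l : {i : ℤ // i ≠ 0} => lam l * zt l) St := hStdef ▸ hSt.hasSum
    have htail : HasSum (fun l : {i : ℤ // i ≠ 0} => x l) (St / (1 + S + St)) :=
      (hStsum.div_const _).congr_fun fun l => hxj l l.2
    convert htail.add_of_subtype_ne 0 using 1
    rw [hx0]
    field_simp
  refine ⟨?_, fun j hj => ?_, hx.summable, hx.tsum_eq⟩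
  · rw [hx0]
    exact stationary_balance_zero hS0 hSt0
  · rw [hxj j hj, hx0]
    exact stationary_balance_ne_zero hS0 hSt0 _

/-- Stationary distribution of the Markov chain associated with each periodic
Gibbs measure `μ₁, μ₂`: the explicitly given vector solves `X·P = X` and is
stochastic. -/
theorem stmt_14 (lam z zt : ℤ → ℝ)
    (hpos : ∀ i : ℤ, i ≠ 0 → 0 < lam i * z i)
    (hpos' : ∀ i : ℤ, i ≠ 0 → 0 < lam i * zt i)
    (hS : Summable fun l : {i : ℤ // i ≠ 0} => lam l * z l)
    (hSt : Summable fun l : {i : ℤ // i ≠ 0} => lam l * zt l)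
    (S St : ℝ)
    (hSdef : S = ∑' l : {i : ℤ // i ≠ 0}, lam l * z l)
    (hStdef : St = ∑' l : {i : ℤ // i ≠ 0}, lam l * zt l)
    (x : ℤ → ℝ)
    (hx0 : x 0 = (1 + S) / (1 + S + St))
    (hxj : ∀ j : ℤ, j ≠ 0 → x j = lam j * zt j / (1 + S + St)) :
    x 0 = (1 - x 0) / (1 + St) + x 0 * (1 - St / ((1 + S) * (1 + St))) ∧
    (∀ j : ℤ, j ≠ 0 →
      x j = (1 - x 0) * (lam j * zt j) / (1 + St) +
        x 0 * (lam j * zt j) / ((1 + S) * (1 + St))) ∧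
    Summable x ∧ ∑' j : ℤ, x j = 1 :=
  stmt_14_general lam z zt hpos hpos' hSt S St hSdef hStdef x hx0 hxj
end

section
/- Let k ≥ 2 be an integer, Λ > 0, and f(x) = Λ/(1+x)^k. Every positive fixed point of f is a fixed point of h = f ∘ f; conversely, if A > 0 and B > 0 satisfy A = f(B) and B = f(A) with A ≠ B, then A and B are fixed points of h that are not fixed points of f, and f'(A_0) < −1 at the unique positive fixed point A_0 of f, where f'(A_0) = −k·A_0/(1+A_0). -/
/-!
For a 2-cycle `A ≠ B` put `t = (1 + A) / (1 + B) ≠ 1` and `σⱼ = 1 + t + ⋯ + t ^ (j - 1)`.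
The cycle equations solve to `B t σ_{k-1} = 1` and `(1 + A) σ_{k-1} = σ_k`, which makes `Λ`
explicit. Since `x ↦ x (1 + x) ^ k` is increasing, `k A₀ > 1 + A₀`, i.e. `A₀ > 1 / (k - 1)`,
says that `Λ` exceeds the value of `x (1 + x) ^ k` at `1 / (k - 1)`; for the means
`Mⱼ = σ_{j+1} / (j + 1)` this is `t M_{k-2} ^ (k + 1) < M_{k-1} ^ k`. It follows from AM-GM,
`t ^ j ≤ Mⱼ ^ 2` (strict for `t ≠ 1`, `j ≥ 1`), and the log-convexity of `j ↦ Mⱼ`, which is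
AM-GM again through `σⱼ σ_{j+2} = σ_{j+1} ^ 2 - t ^ j`: with `M₀ = 1` it gives
`Mⱼ ^ (j + 1) ≤ M_{j+1} ^ j`.
-/

open Finset

theorem succ_mul_pow_add_sq_div_two_le_geom_sum (s : ℝ) (n : ℕ) :
    (n + 1) * s ^ n + (1 - s ^ n) ^ 2 / 2 ≤ ∑ i ∈ range (n + 1), (s ^ 2) ^ i := by
  have hpair : ∀ i ∈ range (n + 1),
      (s ^ 2) ^ i + (s ^ 2) ^ (n - i) = 2 * s ^ n + (s ^ i - s ^ (n - i)) ^ 2 := by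
    intro i hi
    have hsplit : s ^ n = s ^ i * s ^ (n - i) := by
      rw [← pow_add, Nat.add_sub_cancel' (Nat.lt_succ_iff.mp (mem_range.mp hi))]
    rw [hsplit]
    ring
  have hreflect : ∑ i ∈ range (n + 1), (s ^ 2) ^ (n - i) = ∑ i ∈ range (n + 1), (s ^ 2) ^ i :=
    sum_range_reflect (fun i => (s ^ 2) ^ i) (n + 1)
  have hfirst : (1 - s ^ n) ^ 2 ≤ ∑ i ∈ range (n + 1), (s ^ i - s ^ (n - i)) ^ 2 := by
    simpa using single_le_sum (f := fun i => (s ^ i - s ^ (n - i)) ^ 2)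
      (fun i _ => sq_nonneg _) (mem_range.mpr n.succ_pos)
  have htwice := sum_congr rfl hpair
  rw [sum_add_distrib, hreflect, sum_add_distrib] at htwice
  simp only [sum_const, card_range, nsmul_eq_mul] at htwice
  push_cast at htwice
  linarith

noncomputable def powersMean (t : ℝ) (n : ℕ) : ℝ := (∑ i ∈ range (n + 1), t ^ i) / (n + 1)

theorem geom_sum_eq_mul_powersMean (t : ℝ) (n : ℕ) :
    ∑ i ∈ range (n + 1), t ^ i = (n + 1) * powersMean t n := by
  unfold powersMean; field_simp

theorem powersMean_zero (t : ℝ) : powersMean t 0 = 1 := by simp [powersMean]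

theorem powersMean_pos {t : ℝ} (ht : 0 ≤ t) (n : ℕ) : 0 < powersMean t n := by
  have : 0 < ∑ i ∈ range (n + 1), t ^ i := by
    rw [sum_range_succ']; positivity
  unfold powersMean; positivity

theorem pow_add_sq_div_le_powersMean (s : ℝ) (n : ℕ) :
    s ^ n + (1 - s ^ n) ^ 2 / (2 * (n + 1)) ≤ powersMean (s ^ 2) n := by
  have := succ_mul_pow_add_sq_div_two_le_geom_sum s n
  unfold powersMean
  rw [le_div_iff₀ (by positivity)]
  have : (1 - s ^ n) ^ 2 / (2 * (n + 1)) * (n + 1) = (1 - s ^ n) ^ 2 / 2 := by field_simp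
  nlinarith

theorem pow_le_powersMean_sq {t : ℝ} (ht : 0 ≤ t) (n : ℕ) : t ^ n ≤ powersMean t n ^ 2 := by
  obtain ⟨s, hs, rfl⟩ : ∃ s, 0 ≤ s ∧ s ^ 2 = t := ⟨√t, Real.sqrt_nonneg t, Real.sq_sqrt ht⟩
  have := pow_add_sq_div_le_powersMean s n
  rw [← pow_mul, mul_comm, pow_mul]
  have : 0 ≤ (1 - s ^ n) ^ 2 / (2 * (n + 1)) := by positivity
  exact pow_le_pow_left₀ (by positivity) (by linarith) 2

theorem pow_lt_powersMean_sq {t : ℝ} (ht : 0 < t) (ht1 : t ≠ 1) {n : ℕ} (hn : n ≠ 0) :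
    t ^ n < powersMean t n ^ 2 := by
  obtain ⟨s, hs, rfl⟩ : ∃ s, 0 ≤ s ∧ s ^ 2 = t := ⟨√t, Real.sqrt_nonneg t, Real.sq_sqrt ht.le⟩
  have hsn : s ^ n ≠ 1 := by
    intro h
    apply ht1
    rw [← pow_eq_one_iff_of_nonneg (by positivity) hn, ← pow_mul, mul_comm, pow_mul, h, one_pow]
  have := pow_add_sq_div_le_powersMean s n
  have : 0 < (1 - s ^ n) ^ 2 / (2 * (n + 1)) := by
    have : 0 < (1 - s ^ n) ^ 2 := by positivity [sub_ne_zero.mpr hsn.symm]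
    positivity
  rw [← pow_mul, mul_comm, pow_mul]
  exact pow_lt_pow_left₀ (by linarith) (by positivity) two_ne_zero

theorem geom_sum_mul_geom_sum_add_two {R : Type*} [CommRing R] (x : R) (j : ℕ) :
    (∑ i ∈ range j, x ^ i) * ∑ i ∈ range (j + 2), x ^ i
      = (∑ i ∈ range (j + 1), x ^ i) ^ 2 - x ^ j := by
  simp only [sum_range_succ]
  linear_combination x ^ j * geom_sum_mul x j

theorem powersMean_sq_le_mul {t : ℝ} (ht : 0 ≤ t) (j : ℕ) :
    powersMean t (j + 1) ^ 2 ≤ powersMean t j * powersMean t (j + 2) := by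
  have hid := geom_sum_mul_geom_sum_add_two t (j + 1)
  have hamgm := pow_le_powersMean_sq ht (j + 1)
  simp only [geom_sum_eq_mul_powersMean] at hid
  push_cast at hid
  have hj : (0 : ℝ) < (j + 1) * (j + 3) := by positivity
  nlinarith

theorem pow_succ_le_pow_of_sq_le_mul (b : ℕ → ℝ) (hpos : ∀ j, 0 < b j) (h0 : b 0 = 1)
    (hconv : ∀ j, b (j + 1) ^ 2 ≤ b j * b (j + 2)) (j : ℕ) : b j ^ (j + 1) ≤ b (j + 1) ^ j := by
  induction j with
  | zero => simp [h0]
  | succ j ih =>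
    have hsq := pow_le_pow_left₀ (sq_nonneg _) (hconv j) (j + 1)
    have key : b (j + 1) ^ j * b (j + 1) ^ (j + 2) ≤ b (j + 1) ^ j * b (j + 2) ^ (j + 1) := by
      calc b (j + 1) ^ j * b (j + 1) ^ (j + 2) = (b (j + 1) ^ 2) ^ (j + 1) := by ring
        _ ≤ (b j * b (j + 2)) ^ (j + 1) := hsq
        _ = b j ^ (j + 1) * b (j + 2) ^ (j + 1) := mul_pow _ _ _
        _ ≤ b (j + 1) ^ j * b (j + 2) ^ (j + 1) :=
          mul_le_mul_of_nonneg_right ih (pow_nonneg (hpos _).le _)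
    exact le_of_mul_le_mul_left key (pow_pos (hpos _) _)

theorem mul_powersMean_pow_lt {t : ℝ} (ht : 0 < t) (ht1 : t ≠ 1) (m : ℕ) :
    t * powersMean t m ^ (m + 3) < powersMean t (m + 1) ^ (m + 2) := by
  set a := powersMean t m
  set a' := powersMean t (m + 1)
  have ha : 0 < a := powersMean_pos ht.le m
  have ha' : 0 < a' := powersMean_pos ht.le (m + 1)
  have hlog : a ^ (m + 1) ≤ a' ^ m :=
    pow_succ_le_pow_of_sq_le_mul _ (powersMean_pos ht.le) (powersMean_zero t)
      (powersMean_sq_le_mul ht.le) m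
  have hamgm : t ^ (m + 1) < a' ^ 2 := pow_lt_powersMean_sq ht ht1 m.succ_ne_zero
  refine lt_of_pow_lt_pow_left₀ (m + 1) (by positivity) ?_
  calc (t * a ^ (m + 3)) ^ (m + 1) = t ^ (m + 1) * (a ^ (m + 1)) ^ (m + 3) := by ring
    _ ≤ t ^ (m + 1) * (a' ^ m) ^ (m + 3) := by gcongr
    _ < a' ^ 2 * (a' ^ m) ^ (m + 3) := by gcongr
    _ = (a' ^ (m + 2)) ^ (m + 1) := by ring

theorem twoCycle_eq_geom_sum {A B t : ℝ} {n : ℕ} (hB : 1 + B ≠ 0) (ht1 : t ≠ 1)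
    (ht : 1 + A = t * (1 + B)) (hcyc : A * (1 + B) ^ (n + 1) = B * (1 + A) ^ (n + 1)) :
    B * t * ∑ i ∈ range n, t ^ i = 1 ∧
      (1 + A) * ∑ i ∈ range n, t ^ i = ∑ i ∈ range (n + 1), t ^ i := by
  have hA : A = B * t ^ (n + 1) := by
    refine mul_right_cancel₀ (pow_ne_zero (n + 1) hB) ?_
    rw [hcyc, ht, mul_pow]
    ring
  have hBt : B * t * ∑ i ∈ range n, t ^ i = 1 := by
    have h : (B * t * ∑ i ∈ range n, t ^ i - 1) * (t - 1) = 0 := by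
      linear_combination B * t * geom_sum_mul t n - hA + ht
    simpa [sub_eq_zero, ht1] using h
  refine ⟨hBt, ?_⟩
  rw [geom_sum_succ, ht]
  linear_combination hBt

theorem pow_lt_mul_of_twoCycle {A B : ℝ} (hA : 0 < A) (hB : 0 < B) (hAB : A ≠ B) {m : ℕ}
    (hcyc : A * (1 + B) ^ (m + 2) = B * (1 + A) ^ (m + 2)) :
    ((m : ℝ) + 2) ^ (m + 2) < (m + 1) ^ (m + 3) * (B * (1 + A) ^ (m + 2)) := by
  set t := (1 + A) / (1 + B)
  have ht : 0 < t := by positivity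
  have ht1 : t ≠ 1 := by
    intro h
    rw [div_eq_one_iff_eq (by positivity)] at h
    exact hAB (by linarith)
  have htA : 1 + A = t * (1 + B) := (div_mul_cancel₀ _ (by positivity)).symm
  obtain ⟨hBt, hAt⟩ := twoCycle_eq_geom_sum (by positivity) ht1 htA hcyc
  simp only [geom_sum_eq_mul_powersMean] at hAt hBt
  push_cast at hAt hBt
  set a := powersMean t m
  set a' := powersMean t (m + 1)
  have ha : 0 < a := powersMean_pos ht.le m
  rw [← mul_lt_mul_iff_of_pos_right (show 0 < t * ((m + 1) * a) ^ (m + 3) by positivity)]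
  calc ((m : ℝ) + 2) ^ (m + 2) * (t * ((m + 1) * a) ^ (m + 3))
      = ((m + 2) ^ (m + 2) * (m + 1) ^ (m + 3)) * (t * a ^ (m + 3)) := by rw [mul_pow]; ring
    _ < ((m + 2) ^ (m + 2) * (m + 1) ^ (m + 3)) * a' ^ (m + 2) := by
      gcongr; exact mul_powersMean_pow_lt ht ht1 m
    _ = (m + 1) ^ (m + 3) * (B * t * ((m + 1) * a)) * ((1 + A) * ((m + 1) * a)) ^ (m + 2) := by
      rw [hBt, hAt, mul_pow]; ring
    _ = (m + 1) ^ (m + 3) * (B * (1 + A) ^ (m + 2)) * (t * ((m + 1) * a) ^ (m + 3)) := by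
      simp only [mul_pow]; ring

theorem one_add_lt_mul_of_lt {x : ℝ} (hx : 0 ≤ x) {m : ℕ}
    (h : ((m : ℝ) + 2) ^ (m + 2) < (m + 1) ^ (m + 3) * (x * (1 + x) ^ (m + 2))) :
    1 + x < (m + 2) * x := by
  by_contra! hle
  have hx1 : (m + 1) * x ≤ 1 := by linarith
  have hx2 : (m + 1) * (1 + x) ≤ (m : ℝ) + 2 := by linarith
  refine h.not_ge ?_
  calc (m + 1) ^ (m + 3) * (x * (1 + x) ^ (m + 2))
      = ((m + 1) * x) * ((m + 1) * (1 + x)) ^ (m + 2) := by rw [mul_pow]; ring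
    _ ≤ 1 * ((m : ℝ) + 2) ^ (m + 2) := by gcongr
    _ = ((m : ℝ) + 2) ^ (m + 2) := one_mul _

theorem hasDerivAt_div_one_add_pow {Λ x : ℝ} (k : ℕ) (hx : 1 + x ≠ 0)
    (hfix : Λ = x * (1 + x) ^ k) :
    HasDerivAt (fun y => Λ / (1 + y) ^ k) (-(k : ℝ) * x / (1 + x)) x := by
  have hd := (hasDerivAt_const x Λ).div (((hasDerivAt_id x).const_add 1).pow k) (pow_ne_zero k hx)
  refine hd.congr_deriv ?_
  rcases k with _ | k
  · simp
  · simp only [id, Pi.pow_apply, hfix, Nat.add_sub_cancel]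
    field_simp
    push_cast
    ring

theorem stmt_16_general (k : ℕ) (hk : 2 ≤ k) (Λ : ℝ)
    (f : ℝ → ℝ) (hf : f = fun x => Λ / (1 + x) ^ k) :
    (∀ A : ℝ, 0 < A → f A = A → f (f A) = A) ∧
    (∀ A B : ℝ, 0 < A → 0 < B → A = f B → B = f A → A ≠ B →
      f (f A) = A ∧ f (f B) = B ∧ f A ≠ A ∧ f B ≠ B ∧
      ∀ A₀ : ℝ, 0 < A₀ → f A₀ = A₀ →
        HasDerivAt f (-(k : ℝ) * A₀ / (1 + A₀)) A₀ ∧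
        -(k : ℝ) * A₀ / (1 + A₀) < -1) := by
  obtain ⟨m, rfl⟩ : ∃ m, k = m + 2 := ⟨k - 2, by omega⟩
  have hΛ : ∀ x y, 0 < y → f y = x → x * (1 + y) ^ (m + 2) = Λ := fun x y hy h => by
    rw [← h, hf, div_mul_cancel₀ _ (by positivity)]
  refine ⟨fun A _ hfix => by rw [hfix, hfix], fun A B hA hB hAB hBA hne => ?_⟩
  refine ⟨by rw [← hBA, ← hAB], by rw [← hAB, ← hBA], fun h => hne (h ▸ hBA).symm,
    fun h => hne (h ▸ hAB), fun A₀ hA₀ hfix => ?_⟩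
  have hcyc : A * (1 + B) ^ (m + 2) = B * (1 + A) ^ (m + 2) :=
    (hΛ A B hB hAB.symm).trans (hΛ B A hA hBA.symm).symm
  have hΛ₀ : A₀ * (1 + A₀) ^ (m + 2) = Λ := hΛ A₀ A₀ hA₀ hfix
  have hlt : 1 + A₀ < (m + 2) * A₀ := by
    refine one_add_lt_mul_of_lt hA₀.le ?_
    rw [hΛ₀, ← hΛ B A hA hBA.symm]
    exact pow_lt_mul_of_twoCycle hA hB hne hcyc
  refine ⟨hf ▸ hasDerivAt_div_one_add_pow (m + 2) (by positivity) hΛ₀.symm, ?_⟩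
  rw [div_lt_iff₀ (by positivity)]
  push_cast
  linarith

/-- Relations between `f(x) = Λ/(1+x)^k` and `h = f ∘ f`: positive fixed points
of `f` are fixed points of `h`; an off-diagonal 2-cycle gives fixed points of
`h` that are not fixed points of `f`, and forces `f'(A₀) = -kA₀/(1+A₀) < -1`
at the unique positive fixed point `A₀` of `f`. -/
theorem stmt_16 (k : ℕ) (hk : 2 ≤ k) (Λ : ℝ) (hΛ : 0 < Λ)
    (f : ℝ → ℝ) (hf : f = fun x => Λ / (1 + x) ^ k) :
    (∀ A : ℝ, 0 < A → f A = A → f (f A) = A) ∧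
    (∀ A B : ℝ, 0 < A → 0 < B → A = f B → B = f A → A ≠ B →
      f (f A) = A ∧ f (f B) = B ∧ f A ≠ A ∧ f B ≠ B ∧
      ∀ A₀ : ℝ, 0 < A₀ → f A₀ = A₀ →
        HasDerivAt f (-(k : ℝ) * A₀ / (1 + A₀)) A₀ ∧
        -(k : ℝ) * A₀ / (1 + A₀) < -1) :=
  stmt_16_general k hk Λ f hf
end

section
/- Let k ≥ 2 be an integer and let λ : ℤ\{0} → ℝ with λ_i > 0 for all i and Σ_{j≠0} λ_j = Λ < ∞ with 0 < Λ ≤ k^k/(k−1)^{k+1}. If z, z̃ : ℤ\{0} → ℝ are summable with z_i > 0, z̃_i > 0 for all i, and satisfy z_i = λ_i/(1 + Σ_{j≠0} z̃_j)^k and z̃_i = λ_i/(1 + Σ_{j≠0} z_j)^k for every i ≠ 0, then z = z̃. -/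
/-!
Summing the boundary-law equations over `i`, the sums `S = ∑ z` and `T = ∑ z̃` form a two-cycle
`S = f T`, `T = f S` of `f x = Λ / (1 + x) ^ k`. By AM-GM, for `Λ ≤ Λ_cr` the two-step slope
`|f' (f x)| * |f' x|` is at most `1` for `x > -1`, so `x ↦ f (f x) - x` is antitone there. It
vanishes at `T` and at `S`, hence on the whole interval between them; but `f (f x) = x` is a
nontrivial polynomial equation, so that interval is a point. Then `z = z̃` termwise.
-/

open Set Polynomial

theorem pow_succ_mul_le_add_pow (n : ℕ) {a b : ℝ} (ha : 0 < a) (hb : 0 ≤ b) :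
    ((n : ℝ) + 1) ^ (n + 1) * (a ^ n * b) ≤ (n * a + b) ^ (n + 1) := by
  have hn : (0 : ℝ) < n + 1 := by positivity
  have hH : -2 ≤ (b / a - 1) / (n + 1) := by
    rw [le_div_iff₀ hn]
    nlinarith [div_nonneg hb ha.le, (n.cast_nonneg : (0 : ℝ) ≤ n)]
  -- Bernoulli's inequality at `1 + H = (n * a + b) / ((n + 1) * a)`
  have bernoulli := one_add_mul_le_pow hH (n + 1)
  have lhs : 1 + ((n + 1 : ℕ) : ℝ) * ((b / a - 1) / (n + 1)) = b / a := by
    push_cast; field_simp; ring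
  have rhs : 1 + (b / a - 1) / (n + 1) = (n * a + b) / ((n + 1) * a) := by
    field_simp; ring
  rw [lhs, rhs, div_pow, le_div_iff₀ (by positivity)] at bernoulli
  calc ((n : ℝ) + 1) ^ (n + 1) * (a ^ n * b) = b / a * ((n + 1) * a) ^ (n + 1) := by
        rw [mul_pow, pow_succ a]; field_simp
    _ ≤ (n * a + b) ^ (n + 1) := bernoulli

theorem sq_mul_le_pow_of_pow_mul_le {n : ℕ} {K c Λ P : ℝ} (hK : 0 ≤ K) (hc : 0 < c)
    (hΛ : 0 ≤ Λ) (hP : 0 ≤ P) (hamgm : K ^ (n + 1) * Λ ≤ c ^ n * P ^ (n + 1))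
    (hcr : Λ * c ^ (n + 2) ≤ K ^ (n + 1)) :
    (K * Λ) ^ 2 ≤ P ^ (n + 2) := by
  refine le_of_pow_le_pow_left₀ (n := n + 1) n.succ_ne_zero (by positivity) ?_
  refine le_of_mul_le_mul_right ?_ (pow_pos hc (n * (n + 2)))
  calc ((K * Λ) ^ 2) ^ (n + 1) * c ^ (n * (n + 2))
      = K ^ (2 * n + 2) * Λ ^ (n + 2) * (Λ * c ^ (n + 2)) ^ n := by ring
    _ ≤ K ^ (2 * n + 2) * Λ ^ (n + 2) * (K ^ (n + 1)) ^ n := by gcongr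
    _ = (K ^ (n + 1) * Λ) ^ (n + 2) := by ring
    _ ≤ (c ^ n * P ^ (n + 1)) ^ (n + 2) := by gcongr
    _ = (P ^ (n + 2)) ^ (n + 1) * c ^ (n * (n + 2)) := by ring

theorem sq_mul_le_pow_of_le_critical {k : ℕ} (hk : 2 ≤ k) {Λ u : ℝ} (hΛ : 0 < Λ)
    (hcr : Λ ≤ (k : ℝ) ^ k / ((k : ℝ) - 1) ^ (k + 1)) (hu : 0 < u) :
    ((k : ℝ) * Λ) ^ 2 ≤ (u * (1 + Λ / u ^ k)) ^ (k + 1) := by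
  obtain ⟨n, rfl⟩ : ∃ n, k = n + 1 := ⟨k - 1, by omega⟩
  have hn : (0 : ℝ) < n := by exact_mod_cast (by omega : 0 < n)
  push_cast at hcr ⊢
  rw [add_sub_cancel_right, le_div_iff₀ (by positivity)] at hcr
  have hPeq : u * (1 + Λ / u ^ (n + 1)) = n * (u / n) + Λ / u ^ n := by
    field_simp; ring
  have hcancel : (u / n) ^ n * (Λ / u ^ n) = Λ / n ^ n := by
    rw [div_pow]; field_simp
  have amgm := pow_succ_mul_le_add_pow n (div_pos hu hn) (div_nonneg hΛ.le (pow_nonneg hu.le n))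
  rw [← hPeq, hcancel, mul_div_assoc', div_le_iff₀ (by positivity)] at amgm
  exact sq_mul_le_pow_of_pow_mul_le (by positivity) hn hΛ.le (by positivity)
    (by linarith) hcr

noncomputable def boundaryMap (Λ : ℝ) (k : ℕ) (x : ℝ) : ℝ := Λ / (1 + x) ^ k

section boundaryMap

variable {Λ : ℝ} {k : ℕ}

theorem boundaryMap_pos (hΛ : 0 < Λ) {x : ℝ} (hx : -1 < x) : 0 < boundaryMap Λ k x :=
  div_pos hΛ (pow_pos (by linarith) k)

theorem hasDerivAt_boundaryMap {x : ℝ} (hx : 1 + x ≠ 0) :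
    HasDerivAt (boundaryMap Λ k) (-(k * Λ) / (1 + x) ^ (k + 1)) x := by
  refine ((hasDerivAt_const x Λ).fun_div (((hasDerivAt_id' x).const_add 1).fun_pow k)
    (pow_ne_zero k hx)).congr_deriv ?_
  rcases k with _ | n
  · simp
  · simp only [Nat.add_sub_cancel]; field_simp; push_cast; ring

theorem boundaryMap_deriv_mul_deriv_le_one (hk : 2 ≤ k) (hΛ : 0 < Λ)
    (hcr : Λ ≤ (k : ℝ) ^ k / ((k : ℝ) - 1) ^ (k + 1)) {x : ℝ} (hx : -1 < x) :
    k * Λ / (1 + boundaryMap Λ k x) ^ (k + 1) * (k * Λ / (1 + x) ^ (k + 1)) ≤ 1 := by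
  have hu : 0 < 1 + x := by linarith
  have key := sq_mul_le_pow_of_le_critical hk hΛ hcr hu
  have hw : 0 < 1 + boundaryMap Λ k x := by linarith [boundaryMap_pos (k := k) hΛ hx]
  rw [div_mul_div_comm, div_le_one (by positivity), ← mul_pow, ← sq, mul_comm (1 + _)]
  exact key

theorem antitoneOn_boundaryMap_comp_self_sub (hk : 2 ≤ k) (hΛ : 0 < Λ)
    (hcr : Λ ≤ (k : ℝ) ^ k / ((k : ℝ) - 1) ^ (k + 1)) :
    AntitoneOn (fun x ↦ boundaryMap Λ k (boundaryMap Λ k x) - x) (Ioi (-1)) := by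
  have hderiv : ∀ x ∈ Ioi (-1 : ℝ), HasDerivAt (fun x ↦ boundaryMap Λ k (boundaryMap Λ k x) - x)
      (-(k * Λ) / (1 + boundaryMap Λ k x) ^ (k + 1) * (-(k * Λ) / (1 + x) ^ (k + 1)) - 1) x :=
    fun x hx ↦ (((hasDerivAt_boundaryMap (by linarith [boundaryMap_pos (k := k) hΛ hx])).comp x
      (hasDerivAt_boundaryMap (by linarith [mem_Ioi.mp hx]))).sub (hasDerivAt_id x))
  refine antitoneOn_of_deriv_nonpos (convex_Ioi _)
    (fun x hx ↦ (hderiv x hx).continuousAt.continuousWithinAt)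
    (fun x hx ↦ (hderiv x (interior_subset hx)).differentiableAt.differentiableWithinAt)
    fun x hx ↦ ?_
  rw [interior_Ioi] at hx
  rw [(hderiv x hx).deriv, neg_div, neg_div, neg_mul_neg]
  linarith [boundaryMap_deriv_mul_deriv_le_one hk hΛ hcr hx]

theorem finite_setOf_boundaryMap_comp_self_eq (hk : k ≠ 0) (hΛ : 0 < Λ) :
    {x : ℝ | -1 < x ∧ boundaryMap Λ k (boundaryMap Λ k x) = x}.Finite := by
  set p : ℝ[X] := X * ((1 + X) ^ k + C Λ) ^ k - C Λ * (1 + X) ^ (k * k)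
  -- `p.eval (-1) = -Λ ^ k`
  have hp : p ≠ 0 := by
    intro h
    have h₁ := congrArg (eval (-1)) h
    simp [p, hk, hΛ.ne'] at h₁
  refine (finite_setOfPred_isRoot hp).subset fun x ⟨hx, hfix⟩ ↦ ?_
  have hu : 0 < 1 + x := by linarith
  have hcomp : boundaryMap Λ k (boundaryMap Λ k x) =
      Λ * (1 + x) ^ (k * k) / ((1 + x) ^ k + Λ) ^ k := by
    simp only [boundaryMap]
    rw [one_add_div (by positivity), div_pow, div_div_eq_mul_div, ← pow_mul]
  rw [hcomp, div_eq_iff (by positivity)] at hfix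
  simp [p, IsRoot, ← hfix]

theorem eq_of_boundaryMap_two_cycle (hk : 2 ≤ k) (hΛ : 0 < Λ)
    (hcr : Λ ≤ (k : ℝ) ^ k / ((k : ℝ) - 1) ^ (k + 1)) {S T : ℝ} (hS : -1 < S) (hT : -1 < T)
    (hST : boundaryMap Λ k T = S) (hTS : boundaryMap Λ k S = T) : S = T := by
  by_contra hne
  wlog hlt : T < S generalizing S T
  · exact this hT hS hTS hST (fun h ↦ hne h.symm) ((not_lt.mp hlt).lt_of_ne hne)
  have hanti := antitoneOn_boundaryMap_comp_self_sub hk hΛ hcr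
  have hfix : ∀ x ∈ Icc T S, boundaryMap Λ k (boundaryMap Λ k x) = x := by
    intro x hx
    have hx' : x ∈ Ioi (-1) := lt_of_lt_of_le hT hx.1
    have h₁ := hanti hT hx' hx.1
    have h₂ := hanti hx' hS hx.2
    simp only [hST, hTS] at h₁ h₂
    linarith
  exact Icc_infinite hlt <| (finite_setOf_boundaryMap_comp_self_eq (by omega) hΛ).subset
    fun x hx ↦ ⟨hT.trans_le hx.1, hfix x hx⟩

end boundaryMap

theorem stmt_18_general (k : ℕ) (hk : 2 ≤ k)
    (lam : {i : ℤ // i ≠ 0} → ℝ)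
    (Λ : ℝ) (hΛ : Λ = ∑' j, lam j)
    (hΛpos : 0 < Λ)
    (hcr : Λ ≤ (k : ℝ) ^ k / ((k : ℝ) - 1) ^ (k + 1))
    (z zt : {i : ℤ // i ≠ 0} → ℝ)
    (hz : ∀ i, 0 < z i) (hzt : ∀ i, 0 < zt i)
    (heqz : ∀ i, z i = lam i / (1 + ∑' j, zt j) ^ k)
    (heqzt : ∀ i, zt i = lam i / (1 + ∑' j, z j) ^ k) :
    z = zt := by
  have hS : -1 < ∑' j, z j := by linarith [(tsum_nonneg fun i ↦ (hz i).le : 0 ≤ ∑' j, z j)]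
  have hT : -1 < ∑' j, zt j := by linarith [(tsum_nonneg fun i ↦ (hzt i).le : 0 ≤ ∑' j, zt j)]
  have sum_z : boundaryMap Λ k (∑' j, zt j) = ∑' j, z j := by
    rw [boundaryMap, hΛ, ← tsum_div_const]; exact (tsum_congr heqz).symm
  have sum_zt : boundaryMap Λ k (∑' j, z j) = ∑' j, zt j := by
    rw [boundaryMap, hΛ, ← tsum_div_const]; exact (tsum_congr heqzt).symm
  have hsums := eq_of_boundaryMap_two_cycle hk hΛpos hcr hS hT sum_z sum_zt
  funext i
  rw [heqz, heqzt, hsums]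

/-- Uniqueness part of Theorem 2: for `0 < Λ ≤ Λ_cr(k)`, every positive
two-periodic solution of the boundary-law system is translation invariant. -/
theorem stmt_18 (k : ℕ) (hk : 2 ≤ k)
    (lam : {i : ℤ // i ≠ 0} → ℝ) (hlam : ∀ i, 0 < lam i)
    (hsum : Summable lam) (Λ : ℝ) (hΛ : Λ = ∑' j, lam j)
    (hΛpos : 0 < Λ)
    (hcr : Λ ≤ (k : ℝ) ^ k / ((k : ℝ) - 1) ^ (k + 1))
    (z zt : {i : ℤ // i ≠ 0} → ℝ)
    (hzsum : Summable z) (hztsum : Summable zt)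
    (hz : ∀ i, 0 < z i) (hzt : ∀ i, 0 < zt i)
    (heqz : ∀ i, z i = lam i / (1 + ∑' j, zt j) ^ k)
    (heqzt : ∀ i, zt i = lam i / (1 + ∑' j, z j) ^ k) :
    z = zt :=
  stmt_18_general k hk lam Λ hΛ hΛpos hcr z zt hz hzt heqz heqzt
end

section
/- Let k ≥ 2 be an integer, A > 0 with A ≠ 1/(k−1), and let z : ℤ\{0} → ℝ be summable with z_i > 0 for all i and Σ_{j≠0} z_j = A. Let B > 0, B ≠ A, satisfy A(1+B)^k = B(1+A)^k, and define λ_i = z_i(1+B)^k and z̃_i = λ_i/(1+A)^k for i ≠ 0. Then z̃ is summable with Σ_{j≠0} z̃_j = B, and the pairs (z, z̃) and (z̃, z) both satisfy the system z_i = λ_i/(1 + Σ_{j≠0} z̃_j)^k, z̃_i = λ_i/(1 + Σ_{j≠0} z_j)^k for all i ≠ 0. -/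
/-! Since `λ_i = z_i (1+B)^k`, the sequence `z̃` is `z` rescaled by `(1+B)^k / (1+A)^k`, and the
companion-root equation `A(1+B)^k = B(1+A)^k` says exactly that this rescaling sends the sum `A`
to `B`. Both boundary-law equations then reduce to `z_i = λ_i / (1+B)^k` and
`z̃_i = λ_i / (1+A)^k`. -/

theorem hasSum_mul_pow_ratio_of_root {ι : Type*} {z : ι → ℝ} {A B : ℝ} {k : ℕ}
    (hz : HasSum z A) (hA : 1 + A ≠ 0) (hroot : A * (1 + B) ^ k = B * (1 + A) ^ k) :
    HasSum (fun i => z i * ((1 + B) ^ k / (1 + A) ^ k)) B := by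
  have h := hz.mul_right ((1 + B) ^ k / (1 + A) ^ k)
  rwa [mul_div_assoc', hroot, mul_div_cancel_right₀ B (pow_ne_zero k hA)] at h

theorem stmt_19_general (k : ℕ)
    (A : ℝ) (hApos : 0 < A)
    (z : {i : ℤ // i ≠ 0} → ℝ)
    (hzsum : Summable z) (hA : ∑' j, z j = A)
    (B : ℝ) (hBpos : 0 < B)
    (hroot : A * (1 + B) ^ k = B * (1 + A) ^ k)
    (lam zt : {i : ℤ // i ≠ 0} → ℝ)
    (hlam : ∀ i, lam i = z i * (1 + B) ^ k)
    (hzt : ∀ i, zt i = lam i / (1 + A) ^ k) :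
    Summable zt ∧ ∑' j, zt j = B ∧
    (∀ i, z i = lam i / (1 + ∑' j, zt j) ^ k) ∧
    (∀ i, zt i = lam i / (1 + ∑' j, z j) ^ k) := by
  have hzt_eq : zt = fun i => z i * ((1 + B) ^ k / (1 + A) ^ k) := by
    funext i
    rw [hzt i, hlam i, mul_div_assoc]
  have hzt_sum : HasSum zt B := by
    rw [hzt_eq]
    exact hasSum_mul_pow_ratio_of_root (hA ▸ hzsum.hasSum) (by positivity) hroot
  refine ⟨hzt_sum.summable, hzt_sum.tsum_eq, fun i => ?_, fun i => ?_⟩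
  · rw [hzt_sum.tsum_eq, hlam i, mul_div_cancel_right₀ _ (by positivity)]
  · rw [hA, hzt i]

/-- Constructive content of the Proposition in Section 4: from a positive
summable `z` with sum `A ≠ 1/(k-1)` and a companion root `B ≠ A` of
`A(1+B)^k = B(1+A)^k`, the sequences `λ_i = z_i(1+B)^k`, `z̃_i = λ_i/(1+A)^k`
give two-periodic solutions `(z, z̃)` and `(z̃, z)` of the boundary-law
system. -/
theorem stmt_19 (k : ℕ) (hk : 2 ≤ k)
    (A : ℝ) (hApos : 0 < A) (hAne : A ≠ 1 / ((k : ℝ) - 1))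
    (z : {i : ℤ // i ≠ 0} → ℝ) (hz : ∀ i, 0 < z i)
    (hzsum : Summable z) (hA : ∑' j, z j = A)
    (B : ℝ) (hBpos : 0 < B) (hBA : B ≠ A)
    (hroot : A * (1 + B) ^ k = B * (1 + A) ^ k)
    (lam zt : {i : ℤ // i ≠ 0} → ℝ)
    (hlam : ∀ i, lam i = z i * (1 + B) ^ k)
    (hzt : ∀ i, zt i = lam i / (1 + A) ^ k) :
    Summable zt ∧ ∑' j, zt j = B ∧
    (∀ i, z i = lam i / (1 + ∑' j, zt j) ^ k) ∧
    (∀ i, zt i = lam i / (1 + ∑' j, z j) ^ k) :=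
  stmt_19_general k A hApos z hzsum hA B hBpos hroot lam zt hlam hzt
end
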